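/- Let C_{HL,b}(α) = sup over measurable sets E ⊆ ℝⁿ with 0 < |E| < ∞ of (1/|E|)·|{x ∈ ℝⁿ : M_{HL,b} χ_E(x) > α}|. Then lim_{α→1⁻} C_{HL,b}(α) = 1. -/

import Mathlib

open MeasureTheory Set Filter
open scoped ENNReal

/-- The uncentered Hardy–Littlewood maximal operator with respect to
Euclidean balls on `ℝⁿ`. -/
noncomputable def MHLb (n : ℕ) (f : EuclideanSpace ℝ (Fin n) → ℝ≥0∞)
    (x : EuclideanSpace ℝ (Fin n)) : ℝ≥0∞ :=
  ⨆ (z : EuclideanSpace ℝ (Fin n)) (r : ℝ) (_ : 0 < r) (_ : x ∈ Metric.ball z r),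
    (∫⁻ y in Metric.ball z r, f y) / volume (Metric.ball z r)

/-- The sharp Tauberian constant `C_{HL,b}(α)` of the uncentered
Hardy–Littlewood maximal operator with respect to balls. -/
noncomputable def CHLb (n : ℕ) (α : ℝ) : ℝ≥0∞ :=
  ⨆ (E : Set (EuclideanSpace ℝ (Fin n))) (_ : MeasurableSet E)
    (_ : 0 < volume E) (_ : volume E < ⊤),
    volume {x : EuclideanSpace ℝ (Fin n) |
      MHLb n (E.indicator 1) x > ENNReal.ofReal α} / volume E

/-!
`C(α) ≥ 1` for `α < 1` because the unit ball `E` lies in `{M χ_E > α}`.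

Conversely, `A = {M χ_E > α}` is the union of the balls `B` with `|E ∩ B| > α |B|`, so Vitali's
covering lemma gives `|A| ≤ 4ⁿ |E| / α`. Shrinking all these balls by the factor `1 - t` keeps at
least the fraction `(1 - t)ⁿ` of `|A|`: remove a smallest ball and map what is left of it into its
shrunken copy by a homothety. Every point `x` of the shrunken union is the centre of a ball
`B(x, t r)` contained in one of the balls `B = B(z, r)`, so
`|B(x, t r) \ E| ≤ |B \ E| ≤ (1 - α) t⁻ⁿ |B(x, t r)|`, and Besicovitch's covering theorem bounds
the measure of such points outside `E` by `N (1 - α) t⁻ⁿ |A|`. Altogether `C(α) ≤ 1 + (1 - (1 - t)ⁿ + N (1 - α) t⁻ⁿ) 4ⁿ / α`; let `α → 1`,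
then `t → 0`.
-/

open Metric Module Topology

theorem measure_diff_le_ofReal_one_sub_mul {α : Type*} [MeasurableSpace α] {μ : Measure α}
    {E B : Set α} (hE : MeasurableSet E) (hB : μ B ≠ ∞) {a : ℝ} (ha : 0 ≤ a)
    (h : ENNReal.ofReal a * μ B ≤ μ (E ∩ B)) :
    μ (B \ E) ≤ ENNReal.ofReal (1 - a) * μ B := by
  have hsplit : μ (B \ E) = μ B - μ (B ∩ E) :=
    ENNReal.eq_sub_of_add_eq (measure_ne_top_of_subset inter_subset_left hB)
      ((add_comm _ _).trans (measure_inter_add_sdiff B hE))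
  rw [hsplit, ENNReal.ofReal_sub _ ha, ENNReal.ofReal_one, ENNReal.sub_mul fun _ _ => hB,
    one_mul, inter_comm]
  exact tsub_le_tsub_left h _

theorem Besicovitch.measure_le_of_forall_measure_inter_ball_le {α : Type*} [MetricSpace α]
    [SecondCountableTopology α] [MeasurableSpace α] [OpensMeasurableSpace α] {μ : Measure α}
    {N : ℕ} {τ : ℝ} (hτ : 1 < τ) (hN : IsEmpty (SatelliteConfig α N τ)) {S U : Set α}
    {ρ : α → ℝ} {R : ℝ} (hρ : ∀ x ∈ S, 0 < ρ x) (hρR : ∀ x ∈ S, ρ x ≤ R)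
    (hU : ∀ x ∈ S, ball x (ρ x) ⊆ U) {η : ℝ≥0∞}
    (hη : ∀ x ∈ S, μ (S ∩ ball x (ρ x)) ≤ η * μ (ball x (ρ x))) :
    μ S ≤ N * η * μ U := by
  let q : BallPackage S α :=
    { c := (↑)
      r := fun x => ρ x
      rpos := fun x => hρ x x.2
      r_bound := R
      r_le := fun x => hρR x x.2 }
  obtain ⟨s, hdisj, hcov⟩ := exist_disjoint_covering_families hτ hN q
  have hfamily (i : Fin N) : μ (S ∩ ⋃ j ∈ s i, ball (j : α) (ρ j)) ≤ η * μ U := by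
    have hcount : (s i).Countable := ((hdisj i).mono fun _ => ball_subset_closedBall)
      |>.countable_of_isOpen (fun _ _ => isOpen_ball) fun j _ => nonempty_ball.2 (hρ j j.2)
    calc μ (S ∩ ⋃ j ∈ s i, ball (j : α) (ρ j))
        ≤ ∑' j : s i, μ (S ∩ ball (j : α) (ρ j)) := by
          rw [inter_iUnion₂]; exact measure_biUnion_le μ hcount _
      _ ≤ ∑' j : s i, η * μ (ball (j : α) (ρ j)) :=
          ENNReal.tsum_le_tsum fun j => hη _ (j : S).2
      _ = η * μ (⋃ j ∈ s i, ball (j : α) (ρ j)) := by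
          rw [ENNReal.tsum_mul_left, measure_biUnion hcount
            ((hdisj i).mono fun _ => ball_subset_closedBall) fun _ _ => measurableSet_ball]
      _ ≤ η * μ U := by
          gcongr; exact iUnion₂_subset fun j _ => hU j j.2
  have hcover : S ⊆ ⋃ i, S ∩ ⋃ j ∈ s i, ball (j : α) (ρ j) := fun x hx =>
    mem_iUnion.2 ((mem_iUnion.1 (hcov ⟨⟨x, hx⟩, rfl⟩)).imp fun _ hi => ⟨hx, hi⟩)
  calc μ S ≤ ∑ i, μ (S ∩ ⋃ j ∈ s i, ball (j : α) (ρ j)) :=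
        (measure_mono hcover).trans (measure_iUnion_fintype_le _ _)
    _ ≤ ∑ _i : Fin N, η * μ U := Finset.sum_le_sum fun i _ => hfamily i
    _ = N * η * μ U := by simp [mul_assoc]

noncomputable def solyanikBound (d N : ℕ) (t α : ℝ) : ℝ :=
  1 + (1 - (1 - t) ^ d + N * ((1 - α) / t ^ d)) * (4 ^ d / α)

theorem ofReal_solyanikBound {d N : ℕ} {t α : ℝ} (ht₀ : 0 < t) (ht₁ : t ≤ 1) (hα₀ : 0 < α)
    (hα₁ : α ≤ 1) :
    ENNReal.ofReal (solyanikBound d N t α) = 1 + (ENNReal.ofReal (1 - (1 - t) ^ d) +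
      N * ENNReal.ofReal ((1 - α) / t ^ d)) * ((ENNReal.ofReal α)⁻¹ * 4 ^ d) := by
  have hc : 0 ≤ 1 - (1 - t) ^ d := sub_nonneg.2 (pow_le_one₀ (by linarith) (by linarith))
  have hη : 0 ≤ (1 - α) / t ^ d := div_nonneg (by linarith) (by positivity)
  rw [solyanikBound, ENNReal.ofReal_add zero_le_one (by positivity), ENNReal.ofReal_one,
    ENNReal.ofReal_mul (by positivity), ENNReal.ofReal_add hc (by positivity),
    ENNReal.ofReal_mul (by positivity), ENNReal.ofReal_natCast, ENNReal.ofReal_div_of_pos hα₀,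
    ENNReal.ofReal_pow (by norm_num), ENNReal.ofReal_ofNat, ENNReal.div_eq_inv_mul]

section HaarBalls

variable {V : Type*} [NormedAddCommGroup V] [NormedSpace ℝ V]

theorem homothety_notMem_ball_mul {x₀ x z : V} {r₀ r c : ℝ} (hc : c ≤ 1) (hr : r₀ ≤ r)
    (hx : x ∈ ball x₀ r₀) (hxz : x ∉ ball z r) :
    AffineMap.homothety x₀ c x ∉ ball z (c * r) := by
  rw [mem_ball, dist_eq_norm] at hx
  rw [mem_ball, dist_eq_norm, not_lt] at hxz ⊢
  have hsplit : AffineMap.homothety x₀ c x - z = (x - z) - (1 - c) • (x - x₀) := by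
    simp only [AffineMap.homothety_apply, vsub_eq_sub, vadd_eq_add, sub_smul, one_smul]
    abel
  have hshift : ‖(1 - c) • (x - x₀)‖ ≤ (1 - c) * r := by
    rw [norm_smul, Real.norm_of_nonneg (sub_nonneg.2 hc)]
    exact mul_le_mul_of_nonneg_left (hx.le.trans hr) (sub_nonneg.2 hc)
  rw [hsplit]
  linarith [norm_sub_norm_le (x - z) ((1 - c) • (x - x₀))]

theorem image_homothety_ball_diff_subset {ι : Type*} {z : ι → V} {r : ι → ℝ} {c : ℝ}
    (hc₀ : 0 < c) (hc₁ : c ≤ 1) {i : ι} {s : Set ι} (hmin : ∀ k ∈ s, r i ≤ r k) :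
    AffineMap.homothety (z i) c '' (ball (z i) (r i) \ ⋃ k ∈ s, ball (z k) (r k)) ⊆
      ball (z i) (c * r i) \ ⋃ k ∈ s, ball (z k) (c * r k) := by
  rintro - ⟨x, ⟨hxi, hxs⟩, rfl⟩
  simp only [mem_iUnion, not_exists] at hxs
  refine ⟨?_, ?_⟩
  · rw [mem_ball, dist_homothety_center, Real.norm_of_nonneg hc₀.le, dist_comm]
    exact mul_lt_mul_of_pos_left (mem_ball.1 hxi) hc₀
  · simp only [mem_iUnion, not_exists]
    exact fun k hk => homothety_notMem_ball_mul hc₁ (hmin k hk) hxi (hxs k hk)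

variable [FiniteDimensional ℝ V] [MeasurableSpace V] [BorelSpace V]
  (μ : Measure V) [μ.IsAddHaarMeasure]

theorem mul_measure_biUnion_ball_le_measure_biUnion_ball_mul {ι : Type*} (z : ι → V)
    (r : ι → ℝ) {c : ℝ} (hc₀ : 0 < c) (hc₁ : c ≤ 1) (s : Finset ι) :
    ENNReal.ofReal (c ^ finrank ℝ V) * μ (⋃ k ∈ s, ball (z k) (r k)) ≤
      μ (⋃ k ∈ s, ball (z k) (c * r k)) := by
  classical
  induction s using Finset.induction_on_min_value r with
  | empty => simp
  | insert i s _ hmin ih =>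
    set U := ⋃ k ∈ s, ball (z k) (r k)
    set Uc := ⋃ k ∈ s, ball (z k) (c * r k)
    have himage := image_homothety_ball_diff_subset (z := z) hc₀ hc₁ (s := ↑s) hmin
    have hdisj : Disjoint (AffineMap.homothety (z i) c '' (ball (z i) (r i) \ U)) Uc :=
      disjoint_left.2 fun _ hx => (himage hx).2
    simp only [Finset.set_biUnion_insert]
    calc ENNReal.ofReal (c ^ finrank ℝ V) * μ (ball (z i) (r i) ∪ U)
        ≤ ENNReal.ofReal (c ^ finrank ℝ V) * (μ (ball (z i) (r i) \ U) + μ U) := by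
          rw [← sdiff_union_self]
          gcongr
          exact measure_union_le _ _
      _ ≤ μ (AffineMap.homothety (z i) c '' (ball (z i) (r i) \ U)) + μ Uc := by
          rw [mul_add, Measure.addHaar_image_homothety, abs_of_nonneg (by positivity)]
          gcongr
      _ = μ (AffineMap.homothety (z i) c '' (ball (z i) (r i) \ U) ∪ Uc) :=
          (measure_union hdisj (Finset.measurableSet_biUnion _ fun _ _ => measurableSet_ball)).symm
      _ ≤ μ (ball (z i) (c * r i) ∪ Uc) :=
          measure_mono (union_subset_union_left _ (himage.trans sdiff_subset))

theorem mul_measure_iUnion_ball_le_measure_iUnion_ball_mul {ι : Type*} [Countable ι]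
    (z : ι → V) (r : ι → ℝ) {c : ℝ} (hc₀ : 0 < c) (hc₁ : c ≤ 1) :
    ENNReal.ofReal (c ^ finrank ℝ V) * μ (⋃ k, ball (z k) (r k)) ≤
      μ (⋃ k, ball (z k) (c * r k)) := by
  have hmono : Monotone fun s : Finset ι => ⋃ k ∈ s, ball (z k) (r k) :=
    fun _ _ hst => biUnion_subset_biUnion_left hst
  rw [iUnion_eq_iUnion_finset, hmono.measure_iUnion, ENNReal.mul_iSup]
  refine iSup_le fun s => ?_
  calc _ ≤ μ (⋃ k ∈ s, ball (z k) (c * r k)) :=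
        mul_measure_biUnion_ball_le_measure_biUnion_ball_mul μ z r hc₀ hc₁ s
    _ ≤ μ (⋃ k, ball (z k) (c * r k)) :=
        measure_mono (iUnion₂_subset fun k _ => subset_iUnion (fun k => ball (z k) (c * r k)) k)

theorem exists_radius_le_of_measure_ball_le (hd : 0 < finrank ℝ V) {M : ℝ≥0∞} (hM : M ≠ ∞) :
    ∃ R, ∀ x r, μ (ball x r) ≤ M → r ≤ R := by
  set ω := μ (ball (0 : V) 1)
  have hω : ω ≠ 0 := (measure_ball_pos μ 0 one_pos).ne'
  refine ⟨max 1 (M / ω).toReal, fun x r hr => ?_⟩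
  rcases le_or_gt r 1 with h1 | h1
  · exact h1.trans (le_max_left _ _)
  refine le_max_of_le_right ((ENNReal.ofReal_le_iff_le_toReal (ENNReal.div_ne_top hM hω)).1 ?_)
  rw [ENNReal.le_div_iff_mul_le (Or.inl hω) (Or.inr hM)]
  calc ENNReal.ofReal r * ω ≤ ENNReal.ofReal (r ^ finrank ℝ V) * ω := by
        gcongr; exact le_self_pow₀ h1.le hd.ne'
    _ = μ (ball x r) := (Measure.addHaar_ball_of_pos μ x (by linarith)).symm
    _ ≤ M := hr

theorem measure_closedBall_mul {x : V} {a r : ℝ} (ha : 0 ≤ a) (hr : 0 < r) :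
    μ (closedBall x (a * r)) = ENNReal.ofReal a ^ finrank ℝ V * μ (ball x r) := by
  rw [Measure.addHaar_closedBall μ x (by positivity), Measure.addHaar_ball_of_pos μ x hr,
    mul_pow, ENNReal.ofReal_mul (by positivity), ENNReal.ofReal_pow ha, mul_assoc]

theorem mul_measure_iUnion_ball_le {ι : Type*} [Countable ι] {E : Set V} (hE : MeasurableSet E)
    {z : ι → V} {r : ι → ℝ} {R : ℝ} (hr : ∀ i, 0 < r i) (hR : ∀ i, r i ≤ R) {a : ℝ≥0∞}
    (h : ∀ i, a * μ (ball (z i) (r i)) ≤ μ (E ∩ ball (z i) (r i))) :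
    a * μ (⋃ i, ball (z i) (r i)) ≤ 4 ^ finrank ℝ V * μ E := by
  obtain ⟨u, -, hdisj, hcov⟩ := Vitali.exists_disjoint_subfamily_covering_enlargement_closedBall
    univ z r R (fun i _ => hR i) 4 (by norm_num)
  have hcover : (⋃ i, ball (z i) (r i)) ⊆ ⋃ j ∈ u, closedBall (z j) (4 * r j) := by
    refine iUnion_subset fun i => ?_
    obtain ⟨j, hj, hij⟩ := hcov i (mem_univ i)
    exact ball_subset_closedBall.trans
      (hij.trans (subset_biUnion_of_mem (u := fun j => closedBall (z j) (4 * r j)) hj))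
  calc a * μ (⋃ i, ball (z i) (r i))
      ≤ a * ∑' j : u, μ (closedBall (z j) (4 * r j)) := by
        gcongr
        exact (measure_mono hcover).trans (measure_biUnion_le μ u.to_countable _)
    _ = 4 ^ finrank ℝ V * ∑' j : u, a * μ (ball (z j) (r j)) := by
        simp only [measure_closedBall_mul μ zero_le_four (hr _), ENNReal.ofReal_ofNat,
          ← ENNReal.tsum_mul_left]
        exact tsum_congr fun j => mul_left_comm _ _ _
    _ ≤ 4 ^ finrank ℝ V * ∑' j : u, μ (E ∩ ball (z j) (r j)) := by
        gcongr with j; exact h j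
    _ = 4 ^ finrank ℝ V * μ (⋃ j ∈ u, E ∩ ball (z j) (r j)) := by
        rw [measure_biUnion u.to_countable
          (hdisj.mono fun j => inter_subset_right.trans ball_subset_closedBall)
          fun j _ => hE.inter measurableSet_ball]
    _ ≤ 4 ^ finrank ℝ V * μ E := by
        gcongr; exact iUnion₂_subset fun j _ => inter_subset_left

theorem measure_ball_diff_le_of_subset {E : Set V} (hE : MeasurableSet E) {x z : V}
    {r t α : ℝ} (ht : 0 < t) (hα : 0 ≤ α) (hsub : ball x (t * r) ⊆ ball z r)
    (h : ENNReal.ofReal α * μ (ball z r) ≤ μ (E ∩ ball z r)) :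
    μ (ball x (t * r) \ E) ≤
      ENNReal.ofReal ((1 - α) / t ^ finrank ℝ V) * μ (ball x (t * r)) := by
  have hscale : μ (ball x (t * r)) = ENNReal.ofReal (t ^ finrank ℝ V) * μ (ball z r) := by
    rw [Measure.addHaar_ball_mul_of_pos μ x ht, Measure.addHaar_ball_center μ z]
  calc μ (ball x (t * r) \ E) ≤ μ (ball z r \ E) := measure_mono (sdiff_subset_sdiff_left hsub)
    _ ≤ ENNReal.ofReal (1 - α) * μ (ball z r) :=
        measure_diff_le_ofReal_one_sub_mul hE measure_ball_lt_top.ne hα h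
    _ = ENNReal.ofReal ((1 - α) / t ^ finrank ℝ V) * μ (ball x (t * r)) := by
        rw [hscale, ← mul_assoc, ← ENNReal.ofReal_mul' (by positivity),
          div_mul_cancel₀ _ (by positivity)]

theorem measure_iUnion_ball_mul_diff_le {ι : Type*} {N : ℕ} {τ : ℝ} (hτ : 1 < τ)
    (hN : IsEmpty (Besicovitch.SatelliteConfig V N τ)) {E : Set V} (hE : MeasurableSet E)
    {α t : ℝ} (hα : 0 ≤ α) (ht₀ : 0 < t) (ht₁ : t < 1) {z : ι → V} {r : ι → ℝ} {R : ℝ}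
    (hr : ∀ i, 0 < r i) (hR : ∀ i, r i ≤ R)
    (h : ∀ i, ENNReal.ofReal α * μ (ball (z i) (r i)) ≤ μ (E ∩ ball (z i) (r i))) :
    μ ((⋃ i, ball (z i) ((1 - t) * r i)) \ E) ≤
      N * ENNReal.ofReal ((1 - α) / t ^ finrank ℝ V) * μ (⋃ i, ball (z i) (r i)) := by
  rcases isEmpty_or_nonempty ι with hι | hι
  · simp
  have hcenter (x : V) (hx : x ∈ ⋃ i, ball (z i) ((1 - t) * r i)) :
      ∃ i, x ∈ ball (z i) ((1 - t) * r i) := mem_iUnion.1 hx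
  choose! i hi using hcenter
  have hsub (x : V) (hx : x ∈ ⋃ i, ball (z i) ((1 - t) * r i)) :
      ball x (t * r (i x)) ⊆ ball (z (i x)) (r (i x)) :=
    ball_subset_ball' (by linarith [mem_ball.1 (hi x hx)])
  refine Besicovitch.measure_le_of_forall_measure_inter_ball_le hτ hN (ρ := fun x => t * r (i x))
    (fun x _ => mul_pos ht₀ (hr _))
    (fun x _ => (mul_le_of_le_one_left (hr _).le ht₁.le).trans (hR _))
    (fun x hx => (hsub x hx.1).trans (subset_iUnion (fun i => ball (z i) (r i)) _))
    fun x hx => ?_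
  calc μ ((⋃ i, ball (z i) ((1 - t) * r i)) \ E ∩ ball x (t * r (i x)))
      ≤ μ (ball x (t * r (i x)) \ E) := measure_mono fun y hy => ⟨hy.2, hy.1.2⟩
    _ ≤ _ := measure_ball_diff_le_of_subset μ hE ht₀ hα (hsub x hx.1) (h _)

theorem measure_iUnion_ball_le_solyanikBound_mul {ι : Type*} [Countable ι]
    (hd : 0 < finrank ℝ V) {N : ℕ} {τ : ℝ} (hτ : 1 < τ)
    (hN : IsEmpty (Besicovitch.SatelliteConfig V N τ)) {E : Set V} (hE : MeasurableSet E)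
    (hEfin : μ E ≠ ∞) {α t : ℝ} (hα₀ : 0 < α) (hα₁ : α ≤ 1) (ht₀ : 0 < t) (ht₁ : t < 1)
    {z : ι → V} {r : ι → ℝ} (hr : ∀ i, 0 < r i)
    (h : ∀ i, ENNReal.ofReal α * μ (ball (z i) (r i)) ≤ μ (E ∩ ball (z i) (r i))) :
    μ (⋃ i, ball (z i) (r i)) ≤ ENNReal.ofReal (solyanikBound (finrank ℝ V) N t α) * μ E := by
  set d := finrank ℝ V
  set A := ⋃ i, ball (z i) (r i)
  set Ac := ⋃ i, ball (z i) ((1 - t) * r i)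
  have hα : ENNReal.ofReal α ≠ 0 := (ENNReal.ofReal_pos.2 hα₀).ne'
  have hαE : ∀ i, μ (ball (z i) (r i)) ≤ (ENNReal.ofReal α)⁻¹ * μ E := fun i =>
    (ENNReal.mul_le_iff_le_inv hα ENNReal.ofReal_ne_top).1
      ((h i).trans (measure_mono inter_subset_left))
  obtain ⟨R, hR⟩ := exists_radius_le_of_measure_ball_le μ hd
    (ENNReal.mul_ne_top (ENNReal.inv_ne_top.2 hα) hEfin)
  have hrR (i : ι) : r i ≤ R := hR _ _ (hαE i)
  have hweak : μ A ≤ (ENNReal.ofReal α)⁻¹ * 4 ^ d * μ E := by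
    rw [mul_assoc, ← ENNReal.mul_le_iff_le_inv hα ENNReal.ofReal_ne_top]
    exact mul_measure_iUnion_ball_le μ hE hr hrR h
  have hAfin : μ A ≠ ∞ := ne_top_of_le_ne_top (by finiteness) hweak
  have hAcA : Ac ⊆ A := iUnion_mono fun i =>
    ball_subset_ball (mul_le_of_le_one_left (hr i).le (by linarith))
  have hcontract : μ (A \ Ac) ≤ ENNReal.ofReal (1 - (1 - t) ^ d) * μ A := by
    refine measure_diff_le_ofReal_one_sub_mul (MeasurableSet.iUnion fun _ => measurableSet_ball)
      hAfin (by positivity) ?_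
    rw [inter_eq_left.2 hAcA]
    exact mul_measure_iUnion_ball_le_measure_iUnion_ball_mul μ z r (by linarith) (by linarith)
  have hshrunk : μ (Ac \ E) ≤ N * ENNReal.ofReal ((1 - α) / t ^ d) * μ A :=
    measure_iUnion_ball_mul_diff_le μ hτ hN hE hα₀.le ht₀ ht₁ hr hrR h
  have hsplit : A ⊆ E ∪ (A \ Ac) ∪ (Ac \ E) := fun x hx => by
    by_cases hxE : x ∈ E <;> by_cases hxAc : x ∈ Ac <;> simp [*]
  calc μ A ≤ μ E + μ (A \ Ac) + μ (Ac \ E) := (measure_mono hsplit).trans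
        ((measure_union_le _ _).trans (add_le_add_left (measure_union_le _ _) _))
    _ ≤ μ E + (ENNReal.ofReal (1 - (1 - t) ^ d) + N * ENNReal.ofReal ((1 - α) / t ^ d)) *
          μ A := by
        rw [add_assoc, add_mul]
        gcongr
    _ ≤ ENNReal.ofReal (solyanikBound d N t α) * μ E := by
        rw [ofReal_solyanikBound ht₀ ht₁.le hα₀ hα₁, add_mul (1 : ℝ≥0∞), one_mul,
          mul_assoc _ (_ * _)]
        gcongr

end HaarBalls

theorem ofReal_lt_MHLb_indicator_iff {n : ℕ} {E : Set (EuclideanSpace ℝ (Fin n))}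
    (hE : MeasurableSet E) (α : ℝ) (x : EuclideanSpace ℝ (Fin n)) :
    ENNReal.ofReal α < MHLb n (E.indicator 1) x ↔ ∃ z r, 0 < r ∧ x ∈ ball z r ∧
      ENNReal.ofReal α * volume (ball z r) < volume (E ∩ ball z r) := by
  have hratio (z : EuclideanSpace ℝ (Fin n)) {r : ℝ} (hr : 0 < r) :
      ENNReal.ofReal α < (∫⁻ y in ball z r, E.indicator 1 y) / volume (ball z r) ↔
        ENNReal.ofReal α * volume (ball z r) < volume (E ∩ ball z r) := by
    rw [lintegral_indicator_one hE, Measure.restrict_apply hE, ENNReal.lt_div_iff_mul_lt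
      (Or.inl (measure_ball_pos _ z hr).ne') (Or.inl measure_ball_lt_top.ne)]
  simp only [MHLb, lt_iSup_iff, exists_prop]
  refine exists_congr fun z => exists_congr fun r => ?_
  exact ⟨fun ⟨hr, hx, h⟩ => ⟨hr, hx, (hratio z hr).1 h⟩,
    fun ⟨hr, hx, h⟩ => ⟨hr, hx, (hratio z hr).2 h⟩⟩

theorem volume_setOf_MHLb_indicator_le {n N : ℕ} (hn : 1 ≤ n) {τ : ℝ} (hτ : 1 < τ)
    (hN : IsEmpty (Besicovitch.SatelliteConfig (EuclideanSpace ℝ (Fin n)) N τ))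
    {E : Set (EuclideanSpace ℝ (Fin n))} (hE : MeasurableSet E) (hEfin : volume E ≠ ∞)
    {α t : ℝ} (hα₀ : 0 < α) (hα₁ : α ≤ 1) (ht₀ : 0 < t) (ht₁ : t < 1) :
    volume {x | MHLb n (E.indicator 1) x > ENNReal.ofReal α} ≤
      ENNReal.ofReal (solyanikBound n N t α) * volume E := by
  set W := {p : EuclideanSpace ℝ (Fin n) × ℝ |
    0 < p.2 ∧ ENNReal.ofReal α * volume (ball p.1 p.2) < volume (E ∩ ball p.1 p.2)}
  obtain ⟨T, hTW, hTc, hTU⟩ := TopologicalSpace.isOpen_biUnion_countable W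
    (fun p => ball p.1 p.2) fun _ _ => isOpen_ball
  have hset : {x | MHLb n (E.indicator 1) x > ENNReal.ofReal α} = ⋃ p ∈ T, ball p.1 p.2 := by
    ext x
    simp only [hTU, mem_ofPred_eq, gt_iff_lt, ofReal_lt_MHLb_indicator_iff hE, mem_iUnion,
      exists_prop, W, Prod.exists]
    grind
  have := hTc.to_subtype
  have hbound := measure_iUnion_ball_le_solyanikBound_mul volume
    (by rw [finrank_euclideanSpace_fin]; exact hn) hτ hN hE hEfin hα₀ hα₁ ht₀ ht₁
    (fun p : T => (hTW p.2).1) fun p => (hTW p.2).2.le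
  rw [finrank_euclideanSpace_fin] at hbound
  rwa [hset, biUnion_eq_iUnion]

theorem CHLb_le_solyanikBound {n N : ℕ} (hn : 1 ≤ n) {τ : ℝ} (hτ : 1 < τ)
    (hN : IsEmpty (Besicovitch.SatelliteConfig (EuclideanSpace ℝ (Fin n)) N τ))
    {α t : ℝ} (hα₀ : 0 < α) (hα₁ : α ≤ 1) (ht₀ : 0 < t) (ht₁ : t < 1) :
    CHLb n α ≤ ENNReal.ofReal (solyanikBound n N t α) := by
  refine iSup₂_le fun E hE => iSup₂_le fun hE₀ hEfin => ?_
  rw [ENNReal.div_le_iff_le_mul (Or.inl hE₀.ne') (Or.inl hEfin.ne)]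
  exact volume_setOf_MHLb_indicator_le hn hτ hN hE hEfin.ne hα₀ hα₁ ht₀ ht₁

theorem one_le_CHLb {n : ℕ} {α : ℝ} (hα : α < 1) : 1 ≤ CHLb n α := by
  set E := ball (0 : EuclideanSpace ℝ (Fin n)) 1
  have hE₀ : 0 < volume E := measure_ball_pos _ _ one_pos
  have hEfin : volume E < ∞ := measure_ball_lt_top
  have hsub : E ⊆ {x | MHLb n (E.indicator 1) x > ENNReal.ofReal α} := fun x hx =>
    (ofReal_lt_MHLb_indicator_iff measurableSet_ball α x).2 ⟨0, 1, one_pos, hx, by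
      rw [inter_self]
      simpa using ENNReal.mul_lt_mul_left hE₀.ne' hEfin.ne (ENNReal.ofReal_lt_one.2 hα)⟩
  calc 1 = volume E / volume E := (ENNReal.div_self hE₀.ne' hEfin.ne).symm
    _ ≤ volume {x | MHLb n (E.indicator 1) x > ENNReal.ofReal α} / volume E := by gcongr
    _ ≤ CHLb n α := le_iSup₂_of_le E measurableSet_ball (le_iSup₂_of_le hE₀ hEfin le_rfl)

theorem exists_eventually_ofReal_solyanikBound_lt (d N : ℕ) {b : ℝ≥0∞} (hb : 1 < b) :
    ∃ t ∈ Ioo (0 : ℝ) 1, ∀ᶠ α in 𝓝 1, ENNReal.ofReal (solyanikBound d N t α) < b := by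
  have hlim : Tendsto (fun t : ℝ => ENNReal.ofReal (1 + (1 - (1 - t) ^ d) * 4 ^ d))
      (𝓝[>] 0) (𝓝 1) := by
    have hcont : Continuous fun t : ℝ => 1 + (1 - (1 - t) ^ d) * 4 ^ d := by fun_prop
    simpa using (ENNReal.tendsto_ofReal (hcont.tendsto 0)).mono_left nhdsWithin_le_nhds
  obtain ⟨t, htb, ht⟩ :=
    ((hlim.eventually (gt_mem_nhds hb)).and (Ioo_mem_nhdsGT one_pos)).exists
  refine ⟨t, ht, ?_⟩
  have hcont : ContinuousAt (solyanikBound d N t) 1 := by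
    unfold solyanikBound
    fun_prop (disch := norm_num)
  refine (ENNReal.tendsto_ofReal hcont.tendsto).eventually (gt_mem_nhds ?_)
  simpa [solyanikBound] using htb

theorem uncentered_ball_solyanik (n : ℕ) (hn : 1 ≤ n) :
    Filter.Tendsto (CHLb n) (nhdsWithin 1 (Set.Iio 1)) (nhds 1) := by
  obtain ⟨N, τ, hτ, hN⟩ :=
    HasBesicovitchCovering.no_satelliteConfig (α := EuclideanSpace ℝ (Fin n))
  refine tendsto_order.2 ⟨fun a ha => ?_, fun b hb => ?_⟩
  · filter_upwards [self_mem_nhdsWithin] with α hα using ha.trans_le (one_le_CHLb hα)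
  · obtain ⟨t, ⟨ht₀, ht₁⟩, hbound⟩ := exists_eventually_ofReal_solyanikBound_lt n N hb
    filter_upwards [self_mem_nhdsWithin,
      nhdsWithin_le_nhds (hbound.and (lt_mem_nhds one_pos))] with α hα₁ ⟨hαb, hα₀⟩
    exact (CHLb_le_solyanikBound hn hτ hN hα₀ (le_of_lt hα₁) ht₀ ht₁).trans_lt hαb
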